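/- arXiv:1104.4503 — 9 statements merged into one kernel-verified Lean document; each statement's English description precedes it below -/
import Mathlib

section
/- Let r_1 ≥ r_2 ≥ 2 be integers with r_2 dividing 4, and let G be an elementary abelian 2-group of order r_1·r_2. Then every logarithmic signature [B_1, B_2] for G of type (r_1, r_2) has at least one periodic block; i.e., there is no aperiodic logarithmic signature for G of type (r_1, r_2). -/
/-- A subset `B` of a group is periodic if some `g ≠ 1` satisfies `g • B = B`. -/
def IsPeriodic {G : Type*} [Group G] [DecidableEq G] (B : Finset G) : Prop :=
  ∃ g : G, g ≠ 1 ∧ B.image (fun b => g * b) = B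

/-- `B` is a logarithmic signature for `G`: every element of `G` has a unique ordered
factorization with one factor from each block. -/
def IsLogSig {G : Type*} [Group G] {s : ℕ} (B : Fin s → Finset G) : Prop :=
  ∀ g : G, ∃! f : Fin s → G, (∀ i, f i ∈ B i) ∧ (List.ofFn f).prod = g

private lemma periodic_of_stable {G : Type*} [Group G] [DecidableEq G]
    (Bs : Finset G) (g : G) (hg : g ≠ 1) (hmem : ∀ b ∈ Bs, g * b ∈ Bs) :
    IsPeriodic Bs := by
  refine ⟨g, hg, Finset.eq_of_subset_of_card_le ?_ ?_⟩
  · intro z hz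
    obtain ⟨b, hb, rfl⟩ := Finset.mem_image.mp hz
    exact hmem b hb
  · rw [Finset.card_image_of_injective _ (mul_right_injective g)]

/-- In an elementary abelian 2-group of order `r₁ r₂` with `r₁ ≥ r₂ ≥ 2` and `r₂ ∣ 4`,
every logarithmic signature of type `(r₁, r₂)` has a periodic block. -/
theorem stmt2 {G : Type*} [Group G] [Fintype G] [DecidableEq G]
    (hG : ∀ g : G, g * g = 1)
    (r₁ r₂ : ℕ) (h21 : r₂ ≤ r₁) (h2 : 2 ≤ r₂) (hdvd : r₂ ∣ 4)
    (hcard : Fintype.card G = r₁ * r₂)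
    (B : Fin 2 → Finset G) (hB : IsLogSig B)
    (hB1 : (B 0).card = r₁) (hB2 : (B 1).card = r₂) :
    ∃ i, IsPeriodic (B i) := by
  have hinv : ∀ g : G, g⁻¹ = g := by
    intro g; rw [inv_eq_iff_mul_eq_one, hG]
  have hcomm : ∀ a b : G, a * b = b * a := by
    intro a b
    calc a * b = (a * b)⁻¹ := (hinv _).symm
    _ = b⁻¹ * a⁻¹ := mul_inv_rev a b
    _ = b * a := by rw [hinv, hinv]
  have hkey : ∀ a b : G, a * (a * b) = b := by
    intro a b; rw [← mul_assoc, hG, one_mul]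
  have hleft : ∀ a b c : G, a * (b * c) = b * (a * c) := by
    intro a b c; rw [← mul_assoc, hcomm a b, mul_assoc]
  -- existence part of the signature
  have hex : ∀ g : G, ∃ x ∈ B 0, ∃ y ∈ B 1, x * y = g := by
    intro g
    obtain ⟨f, ⟨hf, hprod⟩, _⟩ := hB g
    exact ⟨f 0, hf 0, f 1, hf 1, by simpa using hprod⟩
  -- uniqueness part of the signature
  have huniq : ∀ x y x' y' : G, x ∈ B 0 → y ∈ B 1 → x' ∈ B 0 → y' ∈ B 1 →
      x * y = x' * y' → x = x' ∧ y = y' := by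
    intro x y x' y' hx hy hx' hy' hxy
    obtain ⟨f, -, hu⟩ := hB (x * y)
    have h1 : ![x, y] = f := by
      refine hu ![x, y] ⟨?_, by simp⟩
      intro i; fin_cases i <;> simpa
    have h2 : ![x', y'] = f := by
      refine hu ![x', y'] ⟨?_, by simp [hxy.symm]⟩
      intro i; fin_cases i <;> simpa
    have h := h1.trans h2.symm
    exact ⟨by simpa using congrFun h 0, by simpa using congrFun h 1⟩
  have hr4 : r₂ ≤ 4 := Nat.le_of_dvd (by norm_num) hdvd
  interval_cases r₂
  · -- r₂ = 2 : the second block is always periodic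
    obtain ⟨a, b, hab, hBab⟩ := Finset.card_eq_two.mp hB2
    refine ⟨1, periodic_of_stable _ (a * b) ?_ ?_⟩
    · intro h
      exact hab (by rw [← hkey a b, h, mul_one])
    · intro z hz
      rw [hBab] at hz ⊢
      rcases Finset.mem_insert.mp hz with h | h
      · rw [h, show a * b * a = b by simp [hcomm, hleft, mul_assoc, hkey]]
        simp
      · rw [Finset.mem_singleton.mp h, show a * b * b = a by simp [mul_assoc, hG]]
        simp
  · exact absurd hdvd (by norm_num)
  · -- r₂ = 4
    obtain ⟨a, Bs, ha, heq, hc3⟩ := Finset.card_eq_succ.mp hB2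
    obtain ⟨b, c, d, hbc, hbd, hcd, rfl⟩ := Finset.card_eq_three.mp hc3
    have hB1eq : B 1 = {a, b, c, d} := heq.symm
    have hab : a ≠ b := fun h => ha (by simp [h])
    have hac : a ≠ c := fun h => ha (by simp [h])
    have had : a ≠ d := fun h => ha (by simp [h])
    have hmem : ∀ z : G, z ∈ ({a, b, c, d} : Finset G) ↔ z = a ∨ z = b ∨ z = c ∨ z = d := by
      intro z; simp
    by_cases hs : a * b * c * d = 1
    · -- product of block 1 is trivial: block 1 is periodic with period a*b
      refine ⟨1, periodic_of_stable _ (a * b) ?_ ?_⟩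
      · intro h; exact hab (by rw [← hkey a b, h, mul_one])
      · intro z hz
        rw [hB1eq] at hz ⊢
        rcases (hmem z).mp hz with h | h | h | h <;> rw [h]
        · exact (hmem _).mpr (Or.inr (Or.inl (by
            simp [hcomm, hleft, mul_assoc, hkey])))
        · exact (hmem _).mpr (Or.inl (by simp [mul_assoc, hG]))
        · refine (hmem _).mpr (Or.inr (Or.inr (Or.inr ?_)))
          have : a * b * c = d⁻¹ := by
            rw [← mul_eq_one_iff_eq_inv, mul_assoc, mul_assoc, ← mul_assoc, ← mul_assoc]
            exact hs
          rw [this, hinv]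
        · refine (hmem _).mpr (Or.inr (Or.inr (Or.inl ?_)))
          have h1 : a * b * d * c = 1 := by
            rw [mul_assoc, hcomm d c, ← mul_assoc]; exact hs
          have : a * b * d = c⁻¹ := by
            rw [← mul_eq_one_iff_eq_inv, mul_assoc, mul_assoc, ← mul_assoc, ← mul_assoc]
            exact h1
          rw [this, hinv]
    · -- product s = a*b*c*d nontrivial: it is a period of block 0
      refine ⟨0, periodic_of_stable _ (a * b * c * d) hs ?_⟩
      intro x hx
      have ha' : a ∈ B 1 := by rw [hB1eq]; exact (hmem a).mpr (Or.inl rfl)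
      have hb' : b ∈ B 1 := by rw [hB1eq]; exact (hmem b).mpr (Or.inr (Or.inl rfl))
      have hc' : c ∈ B 1 := by rw [hB1eq]; exact (hmem c).mpr (Or.inr (Or.inr (Or.inl rfl)))
      have hd' : d ∈ B 1 := by rw [hB1eq]; exact (hmem d).mpr (Or.inr (Or.inr (Or.inr rfl)))
      obtain ⟨x₁, hx₁, y₁, hy₁, hfac⟩ := hex (x * a * b * c)
      rw [hB1eq] at hy₁
      rcases (hmem y₁).mp hy₁ with h | h | h | h <;> rw [h] at hfac
      · -- y₁ = a : contradiction b = c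
        exfalso
        have hx1 : x₁ = x * b * c := by
          apply mul_right_cancel (b := a)
          rw [hfac]
          simp [hcomm, hleft, mul_assoc]
        have : x₁ * b = x * c := by
          rw [hx1]; simp [hcomm, hleft, mul_assoc, hkey]
        exact hbc (huniq x₁ b x c hx₁ hb' hx hc' this).2
      · -- y₁ = b : contradiction a = c
        exfalso
        have hx1 : x₁ = x * a * c := by
          apply mul_right_cancel (b := b)
          rw [hfac]
          simp [hcomm, hleft, mul_assoc]
        have : x₁ * a = x * c := by
          rw [hx1]; simp [hcomm, hleft, mul_assoc, hkey]
        exact hac (huniq x₁ a x c hx₁ ha' hx hc' this).2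
      · -- y₁ = c : contradiction a = b
        exfalso
        have hx1 : x₁ = x * a * b := by
          apply mul_right_cancel (b := c)
          rw [hfac]
        have : x₁ * a = x * b := by
          rw [hx1]; simp [hcomm, hleft, mul_assoc, hkey]
        exact hab (huniq x₁ a x b hx₁ ha' hx hb' this).2
      · -- y₁ = d : x * a * b * c * d = x₁ ∈ B 0
        have hx1 : x₁ = a * b * c * d * x := by
          apply mul_right_cancel (b := d)
          rw [hfac]
          simp [hcomm, hleft, mul_assoc, hkey]
        rw [← hx1]; exact hx₁
end

section
/- In the algorithm setting, the sequence β := (B_1,…,B_s) is a logarithmic signature for G; moreover, for each i the sets d_{i,1}·A_i^{(1)}, …, d_{i,r_i}·A_i^{(r_i)} are pairwise disjoint, so that β has type (l_1,…,l_s) where l_i = Σ_{j=1}^{r_i} |A_i^{(j)}|. -/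
/-- The set `P(B)` of periods of `B`. -/
def periods {G : Type*} [Group G] [DecidableEq G] (B : Finset G) : Set G :=
  {g : G | g ≠ 1 ∧ B.image (fun b => g * b) = B}

theorem stmt6 {G : Type*} [CommGroup G] [Fintype G] [DecidableEq G]
    -- the algorithm setting: U ≤ G, R a transversal of U in G
    (U : Subgroup G) (R : Finset G)
    (hR : ∀ g : G, ∃! x, x ∈ R ∧ g⁻¹ * x ∈ U)
    -- δ = (D₁, …, D_s) with Dᵢ = {d i 1, …, d i rᵢ}, a logarithmic signature for R
    (s : ℕ) (r : Fin s → ℕ)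
    (d : (i : Fin s) → Fin (r i) → G)
    (hd : ∀ i, Function.Injective (d i))
    (hδ1 : ∀ j : (i : Fin s) → Fin (r i), (∏ i, d i (j i)) ∈ R)
    (hδ2 : ∀ g ∈ R, ∃! j : (i : Fin s) → Fin (r i), ∏ i, d i (j i) = g)
    -- the nonempty sets A i j ⊆ U, each selection being a logarithmic signature for U
    (A : (i : Fin s) → Fin (r i) → Finset G)
    (hA : ∀ i j, ∀ a ∈ A i j, a ∈ U)
    (hAne : ∀ i j, (A i j).Nonempty)
    (hAsig : ∀ j : (i : Fin s) → Fin (r i), ∀ u : G, u ∈ U →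
      ∃! f : Fin s → G, (∀ i, f i ∈ A i (j i)) ∧ ∏ i, f i = u)
    -- the blocks Bᵢ = ⋃ⱼ (d i j) • (A i j)
    (B : Fin s → Finset G)
    (hB : ∀ i, B i = Finset.univ.biUnion fun j => (A i j).image (fun a => d i j * a))
    :
    -- β = (B₁, …, B_s) is a logarithmic signature for G …
    (∀ g : G, ∃! f : Fin s → G, (∀ i, f i ∈ B i) ∧ ∏ i, f i = g) ∧
    -- … the translates (d i j) • (A i j) are pairwise disjoint …
    (∀ i : Fin s, ∀ j k : Fin (r i), j ≠ k →
      Disjoint ((A i j).image (fun a => d i j * a)) ((A i k).image (fun a => d i k * a))) ∧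
    -- … so β has type (l₁, …, l_s) with lᵢ = ∑ⱼ |A i j|
    (∀ i, (B i).card = ∑ j, (A i j).card) := by
  -- first obtain a default selection j₀
  obtain ⟨x₀, ⟨hx₀R, -⟩, -⟩ := hR 1
  obtain ⟨j₀, -, -⟩ := hδ2 x₀ hx₀R
  -- disjointness
  have hdisj : ∀ i : Fin s, ∀ j k : Fin (r i), j ≠ k →
      Disjoint ((A i j).image (fun a => d i j * a)) ((A i k).image (fun a => d i k * a)) := by
    intro i j k hjk
    rw [Finset.disjoint_left]
    rintro x hxj hxk
    simp only [Finset.mem_image] at hxj hxk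
    obtain ⟨a, ha, rfl⟩ := hxj
    obtain ⟨b, hb, hab⟩ := hxk
    -- hab : d i k * b = d i j * a
    set σ : (i : Fin s) → Fin (r i) := Function.update j₀ i j with hσ
    set τ : (i : Fin s) → Fin (r i) := Function.update j₀ i k with hτ
    have hc : ∀ i' ∈ ({i}ᶜ : Finset (Fin s)), d i' (σ i') = d i' (τ i') := by
      intro i' hi'
      have : i' ≠ i := by simpa using hi'
      simp [hσ, hτ, Function.update_of_ne this]
    have hσprod : ∏ i', d i' (σ i') = d i j * ∏ i' ∈ ({i}ᶜ : Finset (Fin s)), d i' (σ i') := by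
      rw [Fintype.prod_eq_mul_prod_compl i]; simp [hσ]
    have hτprod : ∏ i', d i' (τ i') = d i k * ∏ i' ∈ ({i}ᶜ : Finset (Fin s)), d i' (τ i') := by
      rw [Fintype.prod_eq_mul_prod_compl i]; simp [hτ]
    have hcoset : (∏ i', d i' (σ i'))⁻¹ * (∏ i', d i' (τ i')) ∈ U := by
      have hdk : d i k = d i j * a * b⁻¹ := eq_mul_inv_iff_mul_eq.mpr hab
      have : (∏ i', d i' (σ i'))⁻¹ * (∏ i', d i' (τ i')) = a * b⁻¹ := by
        rw [hσprod, hτprod, Finset.prod_congr rfl hc, hdk]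
        simp [mul_inv_rev, mul_comm, mul_left_comm, mul_assoc]
      rw [this]
      exact U.mul_mem (hA i j a ha) (U.inv_mem (hA i k b hb))
    obtain ⟨y, -, hyuniq⟩ := hR (∏ i', d i' (σ i'))
    have h1 : ∏ i', d i' (σ i') = y := hyuniq _ ⟨hδ1 σ, by simpa using U.one_mem⟩
    have h2 : ∏ i', d i' (τ i') = y := hyuniq _ ⟨hδ1 τ, hcoset⟩
    have heq : d i j = d i k := by
      have := h1.trans h2.symm
      rw [hσprod, hτprod, Finset.prod_congr rfl hc] at this
      exact mul_right_cancel this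
    exact hjk (hd i heq)
  refine ⟨?_, hdisj, ?_⟩
  · intro g
    obtain ⟨x, ⟨hxR, hxU⟩, hxuniq⟩ := hR g
    obtain ⟨j, hj, hjuniq⟩ := hδ2 x hxR
    have hu : x⁻¹ * g ∈ U := by
      have := U.inv_mem hxU
      simpa [mul_comm] using this
    obtain ⟨a, ⟨haA, haprod⟩, hauniq⟩ := hAsig j (x⁻¹ * g) hu
    refine ⟨fun i => d i (j i) * a i, ⟨?_, ?_⟩, ?_⟩
    · intro i
      rw [hB]
      exact Finset.mem_biUnion.2 ⟨j i, Finset.mem_univ _,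
        Finset.mem_image.2 ⟨a i, haA i, rfl⟩⟩
    · rw [Finset.prod_mul_distrib, hj, haprod]; group
    · rintro f ⟨hfB, hfprod⟩
      have hdec : ∀ i, ∃ j' : Fin (r i), ∃ a', a' ∈ A i j' ∧ d i j' * a' = f i := by
        intro i
        have := hfB i
        rw [hB, Finset.mem_biUnion] at this
        obtain ⟨j1, -, hj1⟩ := this
        rw [Finset.mem_image] at hj1
        obtain ⟨a1, ha1, heq⟩ := hj1
        exact ⟨j1, a1, ha1, heq⟩
      choose j' a' ha'mem ha'eq using hdec
      have hxprod : (∏ i, d i (j' i)) * ∏ i, a' i = g := by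
        rw [← Finset.prod_mul_distrib, ← hfprod]
        exact Finset.prod_congr rfl fun i _ => ha'eq i
      have ha'U : (∏ i, a' i) ∈ U := U.prod_mem fun i _ => hA i (j' i) (a' i) (ha'mem i)
      have hx' : ∏ i, d i (j' i) = x := by
        apply hxuniq
        refine ⟨hδ1 j', ?_⟩
        have : g⁻¹ * ∏ i, d i (j' i) = (∏ i, a' i)⁻¹ := by
          rw [← hxprod]; group
        rw [this]
        exact U.inv_mem ha'U
      have hj' : j' = j := hjuniq j' hx'
      subst hj'
      have ha' : a' = a := by
        apply hauniq
        refine ⟨ha'mem, ?_⟩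
        rw [← hxprod, hx']
        group
      subst ha'
      funext i
      exact (ha'eq i).symm
  · intro i
    rw [hB, Finset.card_biUnion]
    · refine Finset.sum_congr rfl fun j _ => ?_
      exact Finset.card_image_of_injective _ (mul_right_injective _)
    · intro j _ k _ hjk
      exact hdisj i j k hjk
end

section
/- In the algorithm setting, d_{i,j}^{-1}·d_{i,k} ∉ U for all i ∈ {1,…,s} and all j, k ∈ {1,…,r_i} with j ≠ k. -/
theorem stmt7 {G : Type*} [CommGroup G] [Fintype G] [DecidableEq G]
    -- the algorithm setting: U ≤ G, R a transversal of U in G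
    (U : Subgroup G) (R : Finset G)
    (hR : ∀ g : G, ∃! x, x ∈ R ∧ g⁻¹ * x ∈ U)
    -- δ = (D₁, …, D_s) with Dᵢ = {d i 1, …, d i rᵢ}, a logarithmic signature for R
    (s : ℕ) (r : Fin s → ℕ)
    (d : (i : Fin s) → Fin (r i) → G)
    (hd : ∀ i, Function.Injective (d i))
    (hδ1 : ∀ j : (i : Fin s) → Fin (r i), (∏ i, d i (j i)) ∈ R)
    (hδ2 : ∀ g ∈ R, ∃! j : (i : Fin s) → Fin (r i), ∏ i, d i (j i) = g)
    -- the nonempty sets A i j ⊆ U, each selection being a logarithmic signature for U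
    (A : (i : Fin s) → Fin (r i) → Finset G)
    (hA : ∀ i j, ∀ a ∈ A i j, a ∈ U)
    (hAne : ∀ i j, (A i j).Nonempty)
    (hAsig : ∀ j : (i : Fin s) → Fin (r i), ∀ u : G, u ∈ U →
      ∃! f : Fin s → G, (∀ i, f i ∈ A i (j i)) ∧ ∏ i, f i = u)
    -- the blocks Bᵢ = ⋃ⱼ (d i j) • (A i j)
    (B : Fin s → Finset G)
    (hB : ∀ i, B i = Finset.univ.biUnion fun j => (A i j).image (fun a => d i j * a))
    :
    -- the coset representatives d i j are pairwise in different cosets of U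
    ∀ i : Fin s, ∀ j k : Fin (r i), j ≠ k → (d i j)⁻¹ * d i k ∉ U := by

  intro i j k hjk hUmem
  -- get a base tuple j0 from some element of R
  obtain ⟨x0, ⟨hx0R, _⟩, _⟩ := hR 1
  obtain ⟨j0, _, _⟩ := hδ2 x0 hx0R
  set t1 := Function.update j0 i j with ht1
  set t2 := Function.update j0 i k with ht2
  have key : ∀ (m : Fin (r i)),
      (∏ i', d i' (Function.update j0 i m i')) = d i m * ∏ i' ∈ {i}ᶜ, d i' (j0 i') := by
    intro m
    rw [Fintype.prod_eq_mul_prod_compl i]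
    congr 1
    · rw [Function.update_self]
    · refine Finset.prod_congr rfl fun x hx => ?_
      rw [Function.update_of_ne (Finset.mem_compl.mp hx ∘ Finset.mem_singleton.mpr)]
  have hp1 : (∏ i', d i' (t1 i')) ∈ R := hδ1 t1
  have hp2 : (∏ i', d i' (t2 i')) ∈ R := hδ1 t2
  have hUdiff : (∏ i', d i' (t1 i'))⁻¹ * (∏ i', d i' (t2 i')) ∈ U := by
    rw [ht1, ht2, key j, key k]
    have : (d i j * ∏ i' ∈ {i}ᶜ, d i' (j0 i'))⁻¹ * (d i k * ∏ i' ∈ {i}ᶜ, d i' (j0 i'))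
        = (d i j)⁻¹ * d i k := by
        simp [mul_inv_rev, mul_comm, mul_left_comm, mul_assoc]
    rw [this]; exact hUmem
  obtain ⟨x, _, hxuniq⟩ := hR (∏ i', d i' (t1 i'))
  have e1 : x = ∏ i', d i' (t1 i') :=
    (hxuniq _ ⟨hp1, by simpa using U.one_mem⟩).symm
  have e2 : x = ∏ i', d i' (t2 i') := (hxuniq _ ⟨hp2, hUdiff⟩).symm
  obtain ⟨jU, _, huniq⟩ := hδ2 _ hp1
  have ht : t1 = t2 := by
    rw [huniq t1 rfl, huniq t2 (e2.symm.trans e1)]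
  apply hjk
  have := congrFun ht i
  rwa [ht1, ht2, Function.update_self, Function.update_self] at this
end

section
/- In the algorithm setting, fix i ∈ {1,…,s} and suppose B_i is periodic with period g (so g ≠ 1 and gB_i = B_i). Then for every j ∈ {1,…,r_i} there exists k ∈ {1,…,r_i} such that g·d_{i,j}·A_i^{(j)} = d_{i,k}·A_i^{(k)}. If additionally A_i^{(j)} and A_i^{(k)} are subgroups of G, then A_i^{(j)} = A_i^{(k)}. -/
theorem stmt9 {G : Type*} [CommGroup G] [Fintype G] [DecidableEq G]
    -- the algorithm setting: U ≤ G, R a transversal of U in G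
    (U : Subgroup G) (R : Finset G)
    (hR : ∀ g : G, ∃! x, x ∈ R ∧ g⁻¹ * x ∈ U)
    -- δ = (D₁, …, D_s) with Dᵢ = {d i 1, …, d i rᵢ}, a logarithmic signature for R
    (s : ℕ) (r : Fin s → ℕ)
    (d : (i : Fin s) → Fin (r i) → G)
    (hd : ∀ i, Function.Injective (d i))
    (hδ1 : ∀ j : (i : Fin s) → Fin (r i), (∏ i, d i (j i)) ∈ R)
    (hδ2 : ∀ g ∈ R, ∃! j : (i : Fin s) → Fin (r i), ∏ i, d i (j i) = g)
    -- the nonempty sets A i j ⊆ U, each selection being a logarithmic signature for U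
    (A : (i : Fin s) → Fin (r i) → Finset G)
    (hA : ∀ i j, ∀ a ∈ A i j, a ∈ U)
    (hAne : ∀ i j, (A i j).Nonempty)
    (hAsig : ∀ j : (i : Fin s) → Fin (r i), ∀ u : G, u ∈ U →
      ∃! f : Fin s → G, (∀ i, f i ∈ A i (j i)) ∧ ∏ i, f i = u)
    -- the blocks Bᵢ = ⋃ⱼ (d i j) • (A i j)
    (B : Fin s → Finset G)
    (hB : ∀ i, B i = Finset.univ.biUnion fun j => (A i j).image (fun a => d i j * a))
    -- fix i, and let g be a period of Bᵢ
    (i : Fin s) (g : G) (hg : g ≠ 1)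
    (hper : (B i).image (fun b => g * b) = B i) :
    -- every g • (d i j) • (A i j) equals some (d i k) • (A i k); moreover if both
    -- A i j and A i k are subgroups of G then A i j = A i k
    ∀ j : Fin (r i), ∃ k : Fin (r i),
      (A i j).image (fun a => g * d i j * a) = (A i k).image (fun a => d i k * a) ∧
      ((∃ Hj : Subgroup G, (A i j : Set G) = Hj) →
        (∃ Hk : Subgroup G, (A i k : Set G) = Hk) → A i j = A i k) := by
  classical
  -- obtain a tuple t of indices
  obtain ⟨x0, ⟨hx0R, -⟩, -⟩ := hR 1
  obtain ⟨t, ht, -⟩ := hδ2 x0 hx0R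
  -- computing the product of an updated tuple
  have hQ : ∀ j : Fin (r i), (∏ i', d i' (Function.update t i j i'))
      = d i j * ∏ i' ∈ Finset.univ \ {i}, d i' (t i') := by
    intro j
    have h1 : (fun i' => d i' (Function.update t i j i'))
        = Function.update (fun i' => d i' (t i')) i (d i j) := by
      funext i'
      by_cases h : i' = i
      · subst h; simp
      · simp [Function.update_of_ne h]
    rw [h1, Finset.prod_update_of_mem (Finset.mem_univ i)]
  -- distinct cosets: the cosets (d i j) U are pairwise distinct
  have key : ∀ j k : Fin (r i), (d i j)⁻¹ * d i k ∈ U → j = k := by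
    intro j k hU
    set Q := ∏ i' ∈ Finset.univ \ {i}, d i' (t i') with hQdef
    have hPj : d i j * Q ∈ R := by
      have := hδ1 (Function.update t i j); rwa [hQ j] at this
    have hPk : d i k * Q ∈ R := by
      have := hδ1 (Function.update t i k); rwa [hQ k] at this
    obtain ⟨y, -, huniq⟩ := hR (d i j * Q)
    have e1 : d i j * Q = y := by
      refine huniq _ ⟨hPj, ?_⟩
      have e : (d i j * Q)⁻¹ * (d i j * Q) = 1 := by group
      rw [e]; exact U.one_mem
    have e2 : d i k * Q = y := by
      refine huniq _ ⟨hPk, ?_⟩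
      have e : (d i j * Q)⁻¹ * (d i k * Q) = (d i j)⁻¹ * d i k := by
        simp [mul_inv_rev, mul_comm, mul_left_comm, mul_assoc]
      rw [e]; exact hU
    have : d i j = d i k := mul_right_cancel (e1.trans e2.symm)
    exact hd i this
  -- membership in B i
  have memB : ∀ x : G, x ∈ B i ↔ ∃ k : Fin (r i), ∃ a ∈ A i k, d i k * a = x := by
    intro x
    rw [hB i]
    simp only [Finset.mem_biUnion, Finset.mem_univ, true_and, Finset.mem_image]
  -- the main inclusion lemma
  have main : ∀ h : G, (B i).image (fun b => h * b) = B i →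
      ∀ j k : Fin (r i), (d i k)⁻¹ * (h * d i j) ∈ U →
      (A i j).image (fun a => h * d i j * a) ⊆ (A i k).image (fun a => d i k * a) := by
    intro h hh j k hUk x hx
    rw [Finset.mem_image] at hx
    obtain ⟨a, ha, rfl⟩ := hx
    have hxB : h * d i j * a ∈ B i := by
      rw [← hh, Finset.mem_image]
      exact ⟨d i j * a, (memB _).mpr ⟨j, a, ha, rfl⟩, by rw [mul_assoc]⟩
    rw [memB] at hxB
    obtain ⟨k', b, hb, heq⟩ := hxB
    have m1 : (d i k)⁻¹ * (h * d i j * a) ∈ U := by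
      have e : (d i k)⁻¹ * (h * d i j * a) = ((d i k)⁻¹ * (h * d i j)) * a := by group
      rw [e]; exact U.mul_mem hUk (hA i j a ha)
    have m2 : (d i k)⁻¹ * d i k' ∈ U := by
      have e : (d i k)⁻¹ * d i k' = ((d i k)⁻¹ * (h * d i j * a)) * b⁻¹ := by
        rw [← heq]; group
      rw [e]; exact U.mul_mem m1 (U.inv_mem (hA i k' b hb))
    obtain rfl := key k k' m2
    rw [Finset.mem_image]; exact ⟨b, hb, heq⟩
  -- the inverse period
  have hper' : (B i).image (fun b => g⁻¹ * b) = B i := by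
    conv_lhs => rw [← hper]
    rw [Finset.image_image]
    have e : ((fun b => g⁻¹ * b) ∘ fun b => g * b) = id := by
      funext b; simp
    rw [e, Finset.image_id]
  intro j
  obtain ⟨a0, ha0⟩ := hAne i j
  have hmem : g * d i j * a0 ∈ B i := by
    rw [← hper, Finset.mem_image]
    exact ⟨d i j * a0, (memB _).mpr ⟨j, a0, ha0, rfl⟩, by rw [mul_assoc]⟩
  rw [memB] at hmem
  obtain ⟨k, b, hb, heq⟩ := hmem
  have hUk : (d i k)⁻¹ * (g * d i j) ∈ U := by
    have e0 : g * d i j = d i k * b * a0⁻¹ := by rw [heq]; group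
    have e : (d i k)⁻¹ * (g * d i j) = b * a0⁻¹ := by rw [e0]; group
    rw [e]; exact U.mul_mem (hA i k b hb) (U.inv_mem (hA i j a0 ha0))
  have sub1 := main g hper j k hUk
  have hUj : (d i j)⁻¹ * (g⁻¹ * d i k) ∈ U := by
    have e : (d i j)⁻¹ * (g⁻¹ * d i k) = ((d i k)⁻¹ * (g * d i j))⁻¹ := by group
    rw [e]; exact U.inv_mem hUk
  have sub2 := main g⁻¹ hper' k j hUj
  have hEq : (A i j).image (fun a => g * d i j * a) = (A i k).image (fun a => d i k * a) := by
    refine Finset.Subset.antisymm sub1 ?_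
    intro y hy
    rw [Finset.mem_image] at hy
    obtain ⟨b', hb', rfl⟩ := hy
    have hm : g⁻¹ * d i k * b' ∈ (A i j).image (fun a => d i j * a) :=
      sub2 (Finset.mem_image_of_mem _ hb')
    rw [Finset.mem_image] at hm
    obtain ⟨c, hc, hc2⟩ := hm
    rw [Finset.mem_image]
    refine ⟨c, hc, ?_⟩
    calc g * d i j * c = g * (d i j * c) := by group
      _ = g * (g⁻¹ * d i k * b') := by rw [hc2]
      _ = d i k * b' := by group
  refine ⟨k, hEq, ?_⟩
  rintro ⟨Hj, hHj⟩ ⟨Hk, hHk⟩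
  have mj : ∀ x : G, x ∈ A i j ↔ x ∈ Hj := by
    intro x; rw [← Finset.mem_coe, hHj, SetLike.mem_coe]
  have mk : ∀ x : G, x ∈ A i k ↔ x ∈ Hk := by
    intro x; rw [← Finset.mem_coe, hHk, SetLike.mem_coe]
  have h1k : (1 : G) ∈ A i k := (mk 1).mpr Hk.one_mem
  have h1j : (1 : G) ∈ A i j := (mj 1).mpr Hj.one_mem
  have hdk : d i k ∈ (A i j).image (fun a => g * d i j * a) := by
    rw [hEq, Finset.mem_image]; exact ⟨1, h1k, mul_one _⟩
  rw [Finset.mem_image] at hdk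
  obtain ⟨a, ha, hadk⟩ := hdk
  have hgd : ∃ c ∈ A i k, d i k * c = g * d i j := by
    have hm : g * d i j * 1 ∈ (A i k).image (fun a => d i k * a) := by
      rw [← hEq]; exact Finset.mem_image_of_mem _ h1j
    rw [mul_one] at hm; rw [Finset.mem_image] at hm; exact hm
  obtain ⟨c, hc, hcd⟩ := hgd
  have hca : c * a = 1 := by
    have e : d i k * (c * a) = d i k * 1 := by
      rw [mul_one, ← mul_assoc, hcd, hadk]
    exact mul_left_cancel e
  have hak : a ∈ A i k := by
    rw [mk, ← inv_eq_of_mul_eq_one_right hca]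
    exact Hk.inv_mem ((mk c).mp hc)
  have hga : d i k * a⁻¹ = g * d i j := by rw [← hadk]; group
  ext x
  constructor
  · intro hx
    have hm : g * d i j * x ∈ (A i k).image (fun a => d i k * a) := by
      rw [← hEq]; exact Finset.mem_image_of_mem _ hx
    rw [Finset.mem_image] at hm
    obtain ⟨y, hy, hyx⟩ := hm
    have hxy : x = a * y := by
      have e : g * d i j * (a * y) = g * d i j * x := by
        rw [← mul_assoc, hadk, hyx]
      exact (mul_left_cancel e).symm
    rw [mk, hxy]
    exact Hk.mul_mem ((mk a).mp hak) ((mk y).mp hy)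
  · intro hx
    have hm : d i k * x ∈ (A i j).image (fun a => g * d i j * a) := by
      rw [hEq]; exact Finset.mem_image_of_mem _ hx
    rw [Finset.mem_image] at hm
    obtain ⟨w, hw, hwx⟩ := hm
    have hxw : x = a⁻¹ * w := by
      have e : d i k * (a⁻¹ * w) = d i k * x := by
        rw [← mul_assoc, hga, hwx]
      exact (mul_left_cancel e).symm
    rw [mj, hxw]
    exact Hj.mul_mem (Hj.inv_mem ((mj a).mp ha)) ((mj w).mp hw)
end

section
/- In the algorithm setting, fix i ∈ {1,…,s}. If ⋂_{j=1}^{r_i} P(D_i^{(j)}) ≠ ∅, then B_i is periodic. -/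
theorem stmt11 {G : Type*} [CommGroup G] [Fintype G] [DecidableEq G]
    -- the algorithm setting: U ≤ G, R a transversal of U in G
    (U : Subgroup G) (R : Finset G)
    (hR : ∀ g : G, ∃! x, x ∈ R ∧ g⁻¹ * x ∈ U)
    -- δ = (D₁, …, D_s) with Dᵢ = {d i 1, …, d i rᵢ}, a logarithmic signature for R
    (s : ℕ) (r : Fin s → ℕ)
    (d : (i : Fin s) → Fin (r i) → G)
    (hd : ∀ i, Function.Injective (d i))
    (hδ1 : ∀ j : (i : Fin s) → Fin (r i), (∏ i, d i (j i)) ∈ R)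
    (hδ2 : ∀ g ∈ R, ∃! j : (i : Fin s) → Fin (r i), ∏ i, d i (j i) = g)
    -- the nonempty sets A i j ⊆ U, each selection being a logarithmic signature for U
    (A : (i : Fin s) → Fin (r i) → Finset G)
    (hA : ∀ i j, ∀ a ∈ A i j, a ∈ U)
    (hAne : ∀ i j, (A i j).Nonempty)
    (hAsig : ∀ j : (i : Fin s) → Fin (r i), ∀ u : G, u ∈ U →
      ∃! f : Fin s → G, (∀ i, f i ∈ A i (j i)) ∧ ∏ i, f i = u)
    -- the blocks Bᵢ = ⋃ⱼ (d i j) • (A i j)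
    (B : Fin s → Finset G)
    (hB : ∀ i, B i = Finset.univ.biUnion fun j => (A i j).image (fun a => d i j * a))
    (i : Fin s)
    -- if the periods of the sets D i j = {d i k : A i k = A i j} have a common element …
    (hcap : (⋂ j : Fin (r i),
      periods ((Finset.univ.filter fun k => A i k = A i j).image (d i))).Nonempty) :
    -- … then Bᵢ is periodic
    IsPeriodic (B i) := by
  obtain ⟨g, hg⟩ := hcap
  simp only [Set.mem_iInter] at hg
  obtain ⟨x, ⟨hxR, _⟩, _⟩ := hR 1
  obtain ⟨j, hj, _⟩ := hδ2 x hxR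
  have hgne : g ≠ 1 := (hg (j i)).1
  refine ⟨g, hgne, ?_⟩
  apply Finset.eq_of_subset_of_card_le
  · intro b hb
    simp only [hB i, Finset.mem_image, Finset.mem_biUnion, Finset.mem_univ, true_and] at hb ⊢
    obtain ⟨b', ⟨k, a, ha, rfl⟩, rfl⟩ := hb
    have hper := (hg k).2
    have hdk : g * d i k ∈ (Finset.univ.filter fun m => A i m = A i k).image (d i) := by
      rw [← hper]
      exact Finset.mem_image_of_mem _ (Finset.mem_image_of_mem _ (by simp))
    simp only [Finset.mem_image, Finset.mem_filter, Finset.mem_univ, true_and] at hdk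
    obtain ⟨k', hk', hk'eq⟩ := hdk
    refine ⟨k', a, by rw [hk']; exact ha, ?_⟩
    rw [hk'eq, mul_assoc]
  · rw [Finset.card_image_of_injective _ (mul_right_injective g)]
end

section
/- In the algorithm setting, fix i ∈ {1,…,s} and assume that A_i^{(j)} is a subgroup of G for every j ∈ {1,…,r_i} and that A_i^{(j)} ≠ A_i^{(k)} for all j ≠ k. Then B_i is periodic if and only if ⋂_{j=1}^{r_i} P(A_i^{(j)}) ≠ ∅. -/
theorem stmt13 {G : Type*} [CommGroup G] [Fintype G] [DecidableEq G]
    -- the algorithm setting: U ≤ G, R a transversal of U in G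
    (U : Subgroup G) (R : Finset G)
    (hR : ∀ g : G, ∃! x, x ∈ R ∧ g⁻¹ * x ∈ U)
    -- δ = (D₁, …, D_s) with Dᵢ = {d i 1, …, d i rᵢ}, a logarithmic signature for R
    (s : ℕ) (r : Fin s → ℕ)
    (d : (i : Fin s) → Fin (r i) → G)
    (hd : ∀ i, Function.Injective (d i))
    (hδ1 : ∀ j : (i : Fin s) → Fin (r i), (∏ i, d i (j i)) ∈ R)
    (hδ2 : ∀ g ∈ R, ∃! j : (i : Fin s) → Fin (r i), ∏ i, d i (j i) = g)
    -- the nonempty sets A i j ⊆ U, each selection being a logarithmic signature for U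
    (A : (i : Fin s) → Fin (r i) → Finset G)
    (hA : ∀ i j, ∀ a ∈ A i j, a ∈ U)
    (hAne : ∀ i j, (A i j).Nonempty)
    (hAsig : ∀ j : (i : Fin s) → Fin (r i), ∀ u : G, u ∈ U →
      ∃! f : Fin s → G, (∀ i, f i ∈ A i (j i)) ∧ ∏ i, f i = u)
    -- the blocks Bᵢ = ⋃ⱼ (d i j) • (A i j)
    (B : Fin s → Finset G)
    (hB : ∀ i, B i = Finset.univ.biUnion fun j => (A i j).image (fun a => d i j * a))
    -- fix i and assume the A i j are pairwise distinct subgroups of G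
    (i : Fin s)
    (hsub : ∀ j : Fin (r i), ∃ H : Subgroup G, (A i j : Set G) = H)
    (hdist : ∀ j k : Fin (r i), j ≠ k → A i j ≠ A i k) :
    -- Bᵢ is periodic iff the periods of the A i j have a common element
    IsPeriodic (B i) ↔ (⋂ j : Fin (r i), periods (A i j)).Nonempty := by
  classical
  -- a fixed tuple (so that each Fin (r i') is nonempty)
  obtain ⟨x, ⟨hxR, -⟩, -⟩ := hR 1
  obtain ⟨t₀, -, -⟩ := hδ2 x hxR
  -- the cosets d i j • U are pairwise distinct
  have hprod : ∀ m : Fin (r i), (∏ i', d i' (Function.update t₀ i m i'))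
      = d i m * ∏ i' ∈ Finset.univ.erase i, d i' (t₀ i') := by
    intro m
    rw [← Finset.prod_erase_mul Finset.univ _ (Finset.mem_univ i), Function.update_self,
      mul_comm]
    congr 1
    apply Finset.prod_congr rfl
    intro i' hi'
    rw [Function.update_of_ne (Finset.mem_erase.1 hi').1]
  have hcoset : ∀ j k : Fin (r i), ∀ u v : G, u ∈ U → v ∈ U → d i j * u = d i k * v → j = k := by
    intro j k u v hu hv h
    set c : G := ∏ i' ∈ Finset.univ.erase i, d i' (t₀ i') with hc
    have memRj : d i j * c ∈ R := by have := hδ1 (Function.update t₀ i j); rwa [hprod j] at this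
    have memRk : d i k * c ∈ R := by have := hδ1 (Function.update t₀ i k); rwa [hprod k] at this
    have hdk : d i k = d i j * (u * v⁻¹) := by
      rw [← mul_assoc, h, mul_inv_cancel_right]
    have hin : (d i j * c)⁻¹ * (d i k * c) = u * v⁻¹ := by
      rw [mul_comm (d i j) c, mul_comm (d i k) c, hdk]
      group
    obtain ⟨x₀, -, hx₀⟩ := hR (d i j * c)
    have e1 : d i j * c = x₀ := hx₀ _ ⟨memRj, by
      have h1 : (d i j * c)⁻¹ * (d i j * c) = 1 := by group
      rw [h1]; exact U.one_mem⟩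
    have e2 : d i k * c = x₀ := hx₀ _ ⟨memRk, by rw [hin]; exact U.mul_mem hu (U.inv_mem hv)⟩
    exact hd i (mul_right_cancel (e1.trans e2.symm))
  -- membership in B i
  have hmemB : ∀ (j : Fin (r i)) (a : G), a ∈ A i j → d i j * a ∈ B i := by
    intro j a ha
    rw [hB]
    exact Finset.mem_biUnion.2 ⟨j, Finset.mem_univ j, Finset.mem_image.2 ⟨a, ha, rfl⟩⟩
  -- the A i j contain 1 and are closed under x⁻¹ * y
  have hone : ∀ j : Fin (r i), (1 : G) ∈ A i j := by
    intro j
    obtain ⟨H, hH⟩ := hsub j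
    have : (1 : G) ∈ (A i j : Set G) := by rw [hH]; exact H.one_mem
    exact Finset.mem_coe.1 this
  have hclosed : ∀ j : Fin (r i), ∀ x ∈ A i j, ∀ y ∈ A i j, x⁻¹ * y ∈ A i j := by
    intro j x hx y hy
    obtain ⟨H, hH⟩ := hsub j
    have hx' : x ∈ (A i j : Set G) := Finset.mem_coe.2 hx
    have hy' : y ∈ (A i j : Set G) := Finset.mem_coe.2 hy
    rw [hH] at hx' hy'
    have : x⁻¹ * y ∈ (A i j : Set G) := by rw [hH]; exact H.mul_mem (H.inv_mem hx') hy'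
    exact Finset.mem_coe.1 this
  -- main step: a period of B i induces a map on the blocks
  have step : ∀ h : G, (B i).image (fun b => h * b) = B i →
      ∃ k : Fin (r i) → Fin (r i), ∀ j, ∀ a ∈ A i j,
        ∃ b ∈ A i (k j), h * (d i j * a) = d i (k j) * b := by
    intro h hh
    have choice : ∀ j : Fin (r i), ∃ kj : Fin (r i), ∀ a ∈ A i j,
        ∃ b ∈ A i kj, h * (d i j * a) = d i kj * b := by
      intro j
      obtain ⟨a₀, ha₀⟩ := hAne i j
      have h0 : h * (d i j * a₀) ∈ B i := by
        rw [← hh]; exact Finset.mem_image_of_mem _ (hmemB j a₀ ha₀)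
      rw [hB] at h0
      obtain ⟨k₀, -, hk₀⟩ := Finset.mem_biUnion.1 h0
      obtain ⟨b₀, hb₀, heq₀⟩ := Finset.mem_image.1 hk₀
      refine ⟨k₀, fun a ha => ?_⟩
      have h1 : h * (d i j * a) ∈ B i := by
        rw [← hh]; exact Finset.mem_image_of_mem _ (hmemB j a ha)
      rw [hB] at h1
      obtain ⟨k₁, -, hk₁⟩ := Finset.mem_biUnion.1 h1
      obtain ⟨b₁, hb₁, heq₁⟩ := Finset.mem_image.1 hk₁
      have key : d i k₁ * b₁ = d i k₀ * (b₀ * (a₀⁻¹ * a)) := by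
        have e : d i k₀ * (b₀ * (a₀⁻¹ * a)) = (d i k₀ * b₀) * (a₀⁻¹ * a) := (mul_assoc _ _ _).symm
        rw [heq₁, e, heq₀]
        group
      have hk₁k₀ : k₁ = k₀ :=
        hcoset k₁ k₀ b₁ _ (hA i k₁ b₁ hb₁)
          (U.mul_mem (hA i k₀ b₀ hb₀)
            (U.mul_mem (U.inv_mem (hA i j a₀ ha₀)) (hA i j a ha))) key
      subst hk₁k₀
      exact ⟨b₁, hb₁, heq₁.symm⟩
    choose k hk using choice
    exact ⟨k, hk⟩
  constructor
  · rintro ⟨g, hg1, hgB⟩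
    have hgB' : (B i).image (fun b => g⁻¹ * b) = B i := by
      conv_lhs => rw [← hgB]
      rw [Finset.image_image]
      have hcomp : ((fun b => g⁻¹ * b) ∘ fun b => g * b) = id := by
        funext b; simp
      rw [hcomp, Finset.image_id]
    obtain ⟨k, hk⟩ := step g hgB
    obtain ⟨k', hk'⟩ := step g⁻¹ hgB'
    have hsubset : ∀ (h : G) (kk : Fin (r i) → Fin (r i)),
        (∀ j, ∀ a ∈ A i j, ∃ b ∈ A i (kk j), h * (d i j * a) = d i (kk j) * b) →
        ∀ j, A i j ⊆ A i (kk j) := by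
      intro h kk hkk j a ha
      obtain ⟨b, hb, heqb⟩ := hkk j a ha
      obtain ⟨b1, hb1, heqb1⟩ := hkk j 1 (hone j)
      have e : (h * (d i j * 1))⁻¹ * (h * (d i j * a)) = a := by group
      rw [heqb, heqb1] at e
      have ha' : a = b1⁻¹ * b := by rw [← e]; group
      rw [ha']
      exact hclosed (kk j) b1 hb1 b hb
    have hfix : ∀ j, k j = j := by
      intro j
      have hkk' : k' (k j) = j := by
        obtain ⟨a₀, ha₀⟩ := hAne i j
        obtain ⟨b, hb, heqb⟩ := hk j a₀ ha₀
        obtain ⟨cc, hc, heqc⟩ := hk' (k j) b hb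
        have e : d i j * a₀ = d i (k' (k j)) * cc := by rw [← heqc, ← heqb]; group
        exact (hcoset j (k' (k j)) a₀ cc (hA i j a₀ ha₀) (hA i _ cc hc) e).symm
      by_contra hne
      have h2 : A i (k j) ⊆ A i j := by
        have := hsubset g⁻¹ k' hk' (k j)
        rwa [hkk'] at this
      exact hdist j (k j) (Ne.symm hne) (Finset.Subset.antisymm (hsubset g k hk j) h2)
    refine ⟨g, Set.mem_iInter.2 fun j => ⟨hg1, ?_⟩⟩
    have hsub1 : (A i j).image (fun b => g * b) ⊆ A i j := by
      intro x hx
      obtain ⟨a, ha, rfl⟩ := Finset.mem_image.1 hx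
      obtain ⟨b, hb, heqb⟩ := hk j a ha
      rw [hfix j] at hb heqb
      have hb' : g * a = b := by
        rw [mul_left_comm] at heqb
        exact mul_left_cancel heqb
      rw [hb']; exact hb
    refine Finset.eq_of_subset_of_card_le hsub1 ?_
    have := Finset.card_image_of_injective (A i j) (mul_right_injective g)
    omega
  · rintro ⟨g, hg⟩
    have hgj : ∀ j, g ∈ periods (A i j) := fun j => Set.mem_iInter.1 hg j
    refine ⟨g, (hgj (t₀ i)).1, ?_⟩
    rw [hB, Finset.biUnion_image]
    apply Finset.biUnion_congr rfl
    intro j _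
    rw [Finset.image_image]
    have hcomp : ((fun b => g * b) ∘ fun a => d i j * a)
        = ((fun a => d i j * a) ∘ fun b => g * b) := by
      funext a; exact mul_left_comm g (d i j) a
    rw [hcomp, ← Finset.image_image, (hgj j).2]
end

section
/- In the algorithm setting, fix i ∈ {1,…,s} and suppose B_i is periodic with period g (so g ≠ 1 and gB_i = B_i). If j, k ∈ {1,…,r_i} are such that A_i^{(j)} is not a proper multiple of A_i^{(k)} and g·d_{i,j}·A_i^{(j)} = d_{i,k}·A_i^{(k)}, then A_i^{(j)} = A_i^{(k)}. -/
theorem stmt14 {G : Type*} [CommGroup G] [Fintype G] [DecidableEq G]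
    -- the algorithm setting: U ≤ G, R a transversal of U in G
    (U : Subgroup G) (R : Finset G)
    (hR : ∀ g : G, ∃! x, x ∈ R ∧ g⁻¹ * x ∈ U)
    -- δ = (D₁, …, D_s) with Dᵢ = {d i 1, …, d i rᵢ}, a logarithmic signature for R
    (s : ℕ) (r : Fin s → ℕ)
    (d : (i : Fin s) → Fin (r i) → G)
    (hd : ∀ i, Function.Injective (d i))
    (hδ1 : ∀ j : (i : Fin s) → Fin (r i), (∏ i, d i (j i)) ∈ R)
    (hδ2 : ∀ g ∈ R, ∃! j : (i : Fin s) → Fin (r i), ∏ i, d i (j i) = g)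
    -- the nonempty sets A i j ⊆ U, each selection being a logarithmic signature for U
    (A : (i : Fin s) → Fin (r i) → Finset G)
    (hA : ∀ i j, ∀ a ∈ A i j, a ∈ U)
    (hAne : ∀ i j, (A i j).Nonempty)
    (hAsig : ∀ j : (i : Fin s) → Fin (r i), ∀ u : G, u ∈ U →
      ∃! f : Fin s → G, (∀ i, f i ∈ A i (j i)) ∧ ∏ i, f i = u)
    -- the blocks Bᵢ = ⋃ⱼ (d i j) • (A i j)
    (B : Fin s → Finset G)
    (hB : ∀ i, B i = Finset.univ.biUnion fun j => (A i j).image (fun a => d i j * a))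
    -- fix i, let g be a period of Bᵢ
    (i : Fin s) (g : G) (hg : g ≠ 1)
    (hper : (B i).image (fun b => g * b) = B i)
    -- let A i j be no proper multiple of A i k
    (j k : Fin (r i))
    (hnpm : ¬ ((∃ h : G, (A i j).image (fun a => h * a) = A i k) ∧ A i j ≠ A i k))
    -- and suppose g • (d i j) • (A i j) = (d i k) • (A i k)
    (heq : (A i j).image (fun a => g * d i j * a) = (A i k).image (fun a => d i k * a)) :
    A i j = A i k := by
  by_contra hne
  apply hnpm
  refine ⟨⟨(d i k)⁻¹ * (g * d i j), ?_⟩, hne⟩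
  ext x
  constructor
  · intro hx0
    obtain ⟨a, ha, rfl⟩ := Finset.mem_image.mp hx0
    have : g * d i j * a ∈ (A i k).image (fun a => d i k * a) := by
      rw [← heq]; exact Finset.mem_image_of_mem _ ha
    obtain ⟨b, hb, hb'⟩ := Finset.mem_image.mp this
    have : (d i k)⁻¹ * (g * d i j) * a = b := by
      rw [mul_assoc, ← hb']
      group
    rw [this]; exact hb
  · intro hx
    have : d i k * x ∈ (A i j).image (fun a => g * d i j * a) := by
      rw [heq]; exact Finset.mem_image_of_mem _ hx
    obtain ⟨a, ha, ha'⟩ := Finset.mem_image.mp this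
    refine Finset.mem_image.mpr ⟨a, ha, ?_⟩
    rw [mul_assoc, ha']
    group
end

section
/- In the algorithm setting, fix i ∈ {1,…,s} and assume that for all j, k ∈ {1,…,r_i} with j ≠ k the set A_i^{(j)} is not a multiple of A_i^{(k)}. Then B_i is periodic if and only if ⋂_{j=1}^{r_i} P(A_i^{(j)}) ≠ ∅. -/
theorem stmt16 {G : Type*} [CommGroup G] [Fintype G] [DecidableEq G]
    -- the algorithm setting: U ≤ G, R a transversal of U in G
    (U : Subgroup G) (R : Finset G)
    (hR : ∀ g : G, ∃! x, x ∈ R ∧ g⁻¹ * x ∈ U)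
    -- δ = (D₁, …, D_s) with Dᵢ = {d i 1, …, d i rᵢ}, a logarithmic signature for R
    (s : ℕ) (r : Fin s → ℕ)
    (d : (i : Fin s) → Fin (r i) → G)
    (hd : ∀ i, Function.Injective (d i))
    (hδ1 : ∀ j : (i : Fin s) → Fin (r i), (∏ i, d i (j i)) ∈ R)
    (hδ2 : ∀ g ∈ R, ∃! j : (i : Fin s) → Fin (r i), ∏ i, d i (j i) = g)
    -- the nonempty sets A i j ⊆ U, each selection being a logarithmic signature for U
    (A : (i : Fin s) → Fin (r i) → Finset G)
    (hA : ∀ i j, ∀ a ∈ A i j, a ∈ U)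
    (hAne : ∀ i j, (A i j).Nonempty)
    (hAsig : ∀ j : (i : Fin s) → Fin (r i), ∀ u : G, u ∈ U →
      ∃! f : Fin s → G, (∀ i, f i ∈ A i (j i)) ∧ ∏ i, f i = u)
    -- the blocks Bᵢ = ⋃ⱼ (d i j) • (A i j)
    (B : Fin s → Finset G)
    (hB : ∀ i, B i = Finset.univ.biUnion fun j => (A i j).image (fun a => d i j * a))
    -- fix i and assume A i j is not a multiple of A i k for distinct j, k
    (i : Fin s)
    (hnm : ∀ j k : Fin (r i), j ≠ k →
      ¬ ∃ h : G, (A i j).image (fun a => h * a) = A i k) :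
    -- Bᵢ is periodic iff the periods of the A i j have a common element
    IsPeriodic (B i) ↔ (⋂ j : Fin (r i), periods (A i j)).Nonempty := by
  classical
  -- R is nonempty, so there is at least one index tuple j0
  obtain ⟨x0, ⟨hx0R, -⟩, -⟩ := hR 1
  obtain ⟨j0, -, -⟩ := hδ2 x0 hx0R
  -- membership characterization of B i
  have hmem : ∀ x, x ∈ B i ↔ ∃ k, ∃ b ∈ A i k, d i k * b = x := by
    intro x
    rw [hB i]
    constructor
    · intro hx
      obtain ⟨k, -, hk⟩ := Finset.mem_biUnion.1 hx
      obtain ⟨b, hb, hbe⟩ := Finset.mem_image.1 hk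
      exact ⟨k, b, hb, hbe⟩
    · rintro ⟨k, b, hb, rfl⟩
      exact Finset.mem_biUnion.2 ⟨k, Finset.mem_univ _, Finset.mem_image_of_mem _ hb⟩
  -- distinct indices give distinct cosets of U
  have hL1 : ∀ j k : Fin (r i), (d i j)⁻¹ * d i k ∈ U → j = k := by
    intro j k hjk
    have key : ∀ m : Fin (r i),
        ∏ i', d i' (Function.update j0 i m i')
          = d i m * ∏ i' ∈ (Finset.univ \ {i}), d i' (j0 i') := by
      intro m
      have e : (fun i' => d i' (Function.update j0 i m i'))
          = Function.update (fun i' => d i' (j0 i')) i (d i m) := by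
        funext i'
        rcases eq_or_ne i' i with rfl | h
        · simp
        · simp [Function.update_of_ne h]
      rw [e, Finset.prod_update_of_mem (Finset.mem_univ i)]
    set C := ∏ i' ∈ (Finset.univ \ {i}), d i' (j0 i') with hC
    have hj := hδ1 (Function.update j0 i j)
    have hk := hδ1 (Function.update j0 i k)
    rw [key j] at hj
    rw [key k] at hk
    have hcos : (d i j * C)⁻¹ * (d i k * C) ∈ U := by
      have e : (d i j * C)⁻¹ * (d i k * C) = (d i j)⁻¹ * d i k := by
        simp [mul_inv, mul_comm, mul_left_comm, mul_assoc]
      rw [e]; exact hjk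
    obtain ⟨x, -, hxu⟩ := hR (d i j * C)
    have e1 := hxu _ ⟨hj, by rw [inv_mul_cancel]; exact U.one_mem⟩
    have e2 := hxu _ ⟨hk, hcos⟩
    have heq : d i j * C = d i k * C := e1.trans e2.symm
    exact hd i (mul_right_cancel heq)
  constructor
  · rintro ⟨g, hg1, hgB⟩
    refine ⟨g, Set.mem_iInter.2 fun j => ?_⟩
    have hfwd : ∀ x ∈ B i, g * x ∈ B i := by
      intro x hx; rw [← hgB]; exact Finset.mem_image_of_mem _ hx
    have hbwd : ∀ x ∈ B i, g⁻¹ * x ∈ B i := by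
      intro x hx
      rw [← hgB] at hx
      obtain ⟨y, hy, rfl⟩ := Finset.mem_image.1 hx
      simpa using hy
    obtain ⟨a0, ha0⟩ := hAne i j
    have hx1 : g * (d i j * a0) ∈ B i := hfwd _ ((hmem _).2 ⟨j, a0, ha0, rfl⟩)
    obtain ⟨k, b0, hb0, hk0⟩ := (hmem _).1 hx1
    -- hk0 : d i k * b0 = g * (d i j * a0)
    set u0 := b0 * a0⁻¹ with hu0def
    have hu0U : u0 ∈ U := U.mul_mem (hA i k b0 hb0) (U.inv_mem (hA i j a0 ha0))
    have hgd : g * d i j = d i k * u0 := by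
      rw [hu0def, ← mul_assoc, hk0]
      group
    have himg : (A i j).image (fun a => u0 * a) = A i k := by
      apply Finset.ext
      intro y
      simp only [Finset.mem_image]
      constructor
      · rintro ⟨a, ha, rfl⟩
        have hx : g * (d i j * a) ∈ B i := hfwd _ ((hmem _).2 ⟨j, a, ha, rfl⟩)
        obtain ⟨k', b, hb, hk'⟩ := (hmem _).1 hx
        -- hk' : d i k' * b = g * (d i j * a)
        have heq2 : d i k' * b = d i k * (u0 * a) := by
          rw [hk', ← mul_assoc, hgd, mul_assoc]
        have hkk' : k = k' := hL1 k k' (by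
          have e : (d i k)⁻¹ * d i k' = (u0 * a) * b⁻¹ := by
            rw [eq_mul_inv_iff_mul_eq, mul_assoc, heq2]
            group
          rw [e]
          exact U.mul_mem (U.mul_mem hu0U (hA i j a ha)) (U.inv_mem (hA i k' b hb)))
        have hb' : u0 * a = b := by
          rw [← hkk'] at heq2
          exact (mul_left_cancel heq2).symm
        rw [hb', hkk']
        exact hb
      · intro hy
        have hx : g⁻¹ * (d i k * y) ∈ B i := hbwd _ ((hmem _).2 ⟨k, y, hy, rfl⟩)
        obtain ⟨m, a, ha, hmeq⟩ := (hmem _).1 hx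
        -- hmeq : d i m * a = g⁻¹ * (d i k * y)
        have hgd' : g⁻¹ * d i k = d i j * u0⁻¹ := by
          rw [inv_mul_eq_iff_eq_mul, ← mul_assoc, hgd]
          group
        have heq3 : d i m * a = d i j * (u0⁻¹ * y) := by
          rw [hmeq, ← mul_assoc, hgd', mul_assoc]
        have hjm : j = m := hL1 j m (by
          have e : (d i j)⁻¹ * d i m = (u0⁻¹ * y) * a⁻¹ := by
            rw [eq_mul_inv_iff_mul_eq, mul_assoc, heq3]
            group
          rw [e]
          exact U.mul_mem (U.mul_mem (U.inv_mem hu0U) (hA i k y hy))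
            (U.inv_mem (hA i m a ha)))
        refine ⟨a, by rw [hjm]; exact ha, ?_⟩
        have ha' : a = u0⁻¹ * y := by
          rw [← hjm] at heq3
          exact mul_left_cancel heq3
        rw [ha']
        group
    have hjk : j = k := by
      by_contra hne
      exact hnm j k hne ⟨u0, himg⟩
    have hu0g : u0 = g := by
      rw [← hjk] at hgd
      have e : d i j * g = d i j * u0 := by rw [mul_comm (d i j) g, hgd]
      exact (mul_left_cancel e).symm
    rw [← hjk, hu0g] at himg
    exact ⟨hg1, himg⟩
  · rintro ⟨g, hg⟩
    have hgj : ∀ j, g ≠ 1 ∧ (A i j).image (fun b => g * b) = A i j :=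
      fun j => Set.mem_iInter.1 hg j
    refine ⟨g, (hgj (j0 i)).1, ?_⟩
    rw [hB i, Finset.biUnion_image]
    congr 1
    funext j
    rw [Finset.image_image]
    conv_rhs => rw [← (hgj j).2]
    rw [Finset.image_image]
    congr 1
    funext a
    simp [Function.comp, mul_comm, mul_left_comm]
end

section
/- Let G be an elementary abelian 2-group, let U and W be subgroups of G with U ∩ W = {1} and |U| ≥ 4, and let k, k' ∈ W \ {1} with k ≠ k'. Write U^# := U \ {1}, A := {1} ∪ k·U^#, and A' := {1} ∪ k'·U^#. Then A is not a multiple of A' (there is no g ∈ G with gA = A'), and A is not periodic (there is no g ∈ G with g ≠ 1 and gA = A). -/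
/-- In an elementary abelian 2-group, with `U ∩ W = 1`, `|U| ≥ 4` and distinct
nontrivial `k, k' ∈ W`, the set `A = {1} ∪ k·U^#` is not a multiple of
`A' = {1} ∪ k'·U^#`, and `A` is not periodic. -/
theorem stmt19 {G : Type*} [Group G] [Finite G] (hG : ∀ g : G, g * g = 1)
    (U W : Subgroup G) (hUW : U ⊓ W = ⊥) (hU : 4 ≤ Nat.card U)
    (k k' : G) (hk : k ∈ W) (hk' : k' ∈ W)
    (hk1 : k ≠ 1) (hk'1 : k' ≠ 1) (hkk' : k ≠ k')
    (A A' : Set G)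
    (hA : A = {1} ∪ (fun u => k * u) '' ((U : Set G) \ {1}))
    (hA' : A' = {1} ∪ (fun u => k' * u) '' ((U : Set G) \ {1})) :
    (¬ ∃ g : G, (fun a => g * a) '' A = A') ∧
    (¬ ∃ g : G, g ≠ 1 ∧ (fun a => g * a) '' A = A) := by
  subst hA hA'
  have hinv : ∀ a : G, a⁻¹ = a := fun a => inv_eq_of_mul_eq_one_left (hG a)
  have comm : ∀ a b : G, a * b = b * a := by
    intro a b
    calc a * b = (a * b)⁻¹ := (hinv _).symm
      _ = b⁻¹ * a⁻¹ := mul_inv_rev a b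
      _ = b * a := by rw [hinv, hinv]
  have lcomm : ∀ a b c : G, a * (b * c) = b * (a * c) := fun a b c => by
    rw [← mul_assoc, comm a b, mul_assoc]
  have sq' : ∀ a b : G, a * (a * b) = b := fun a b => by
    rw [← mul_assoc, hG, one_mul]
  have hUWfalse : ∀ x : G, x ∈ U → x ∈ W → x ≠ 1 → False := by
    intro x hxU hxW hx1
    apply hx1
    have : x ∈ U ⊓ W := Subgroup.mem_inf.mpr ⟨hxU, hxW⟩
    rwa [hUW, Subgroup.mem_bot] at this
  have hkk'W : k * k' ∈ W := mul_mem hk hk'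
  have hkk'1 : k * k' ≠ 1 := by
    intro h
    have h2 : k' = k := by rw [← sq' k k', h, mul_one]
    exact hkk' h2.symm
  -- there is an element of U other than 1 and any given x
  have exU : ∀ x : G, ∃ u : G, u ∈ U ∧ u ≠ 1 ∧ u ≠ x := by
    intro x
    by_contra h
    push_neg at h
    have hsub : (U : Set G) ⊆ {1, x} := by
      intro u hu
      rcases eq_or_ne u 1 with h1 | h1
      · exact Or.inl h1
      · exact Or.inr (h u hu h1)
    have hle : Nat.card U ≤ 2 := by
      have h1 := Set.ncard_le_ncard hsub (Set.toFinite _)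
      have h2 : ({1, x} : Set G).ncard ≤ 2 :=
        (Set.ncard_insert_le _ _).trans (by simp)
      have h3 : Nat.card U = (U : Set G).ncard := by
        rw [← Nat.card_coe_set_eq]; rfl
      omega
    omega
  constructor
  · rintro ⟨g, hg⟩
    have h1A : (1 : G) ∈ ({1} ∪ (fun u => k * u) '' ((U : Set G) \ {1})) :=
      Or.inl rfl
    have hgA' : g ∈ ({1} ∪ (fun u => k' * u) '' ((U : Set G) \ {1})) := by
      have := hg ▸ Set.mem_image_of_mem (fun a => g * a) h1A
      simpa using this
    rcases hgA' with hg1 | ⟨u₀, ⟨hu₀U, hu₀1⟩, hgu₀⟩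
    · -- g = 1, so A = A'
      have hg1 : g = 1 := hg1
      subst hg1
      obtain ⟨u, huU, hu1, -⟩ := exU 1
      have hkuA' : k * u ∈ ({1} ∪ (fun u => k' * u) '' ((U : Set G) \ {1})) := by
        have : k * u ∈ ({1} ∪ (fun u => k * u) '' ((U : Set G) \ {1})) :=
          Or.inr ⟨u, ⟨huU, hu1⟩, rfl⟩
        have := hg ▸ Set.mem_image_of_mem (fun a => (1 : G) * a) this
        simpa using this
      rcases hkuA' with h1 | ⟨v, ⟨hvU, hv1⟩, hve⟩
      · -- k * u = 1, so k = u ∈ U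
        have hku : k * u = 1 := h1
        have : k = u := by
          rw [← sq' u k, comm u k, hku, mul_one]
        exact hUWfalse k (this ▸ huU) hk hk1
      · -- k' * v = k * u
        have hv2 : v = k' * (k * u) := by rw [← hve]; exact (sq' k' v).symm
        have : k * k' = u * v := by
          rw [hv2]; simp [comm, lcomm, sq', hG]
        exact hUWfalse (k * k') (this ▸ mul_mem huU hvU) hkk'W hkk'1
    · -- g = k' * u₀
      simp only at hgu₀
      obtain ⟨u, huU, hu1, hune⟩ := exU (g * k)
      have hguA' : g * (k * u) ∈ ({1} ∪ (fun u => k' * u) '' ((U : Set G) \ {1})) := by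
        have : k * u ∈ ({1} ∪ (fun u => k * u) '' ((U : Set G) \ {1})) :=
          Or.inr ⟨u, ⟨huU, hu1⟩, rfl⟩
        exact hg ▸ Set.mem_image_of_mem (fun a => g * a) this
      rcases hguA' with h1 | ⟨v, ⟨hvU, hv1⟩, hve⟩
      · -- g * (k * u) = 1, so u = g * k
        have h1 : g * (k * u) = 1 := h1
        apply hune
        rw [← sq' (g * k) u, mul_assoc g k u, h1, mul_one]
      · -- k' * v = g * (k * u) with g = k' * u₀ : then k ∈ U
        simp only at hve
        have hv2 : v = u₀ * (k * u) := by
          have h5 : k' * v = k' * (u₀ * (k * u)) := by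
            rw [hve, ← hgu₀, mul_assoc]
          exact mul_left_cancel h5
        have hkeq : k = u₀ * (u * v) := by
          rw [hv2]; simp [comm, lcomm, sq', hG]
        exact hUWfalse k (hkeq ▸ mul_mem hu₀U (mul_mem huU hvU)) hk hk1
  · rintro ⟨g, hgne, hg⟩
    have h1A : (1 : G) ∈ ({1} ∪ (fun u => k * u) '' ((U : Set G) \ {1})) :=
      Or.inl rfl
    have hgA : g ∈ ({1} ∪ (fun u => k * u) '' ((U : Set G) \ {1})) := by
      have := hg ▸ Set.mem_image_of_mem (fun a => g * a) h1A
      simpa using this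
    rcases hgA with hg1 | ⟨u₀, ⟨hu₀U, hu₀1⟩, hgu₀⟩
    · exact hgne hg1
    · simp only at hgu₀
      obtain ⟨u, huU, hu1, hune⟩ := exU u₀
      have hguA : g * (k * u) ∈ ({1} ∪ (fun u => k * u) '' ((U : Set G) \ {1})) := by
        have : k * u ∈ ({1} ∪ (fun u => k * u) '' ((U : Set G) \ {1})) :=
          Or.inr ⟨u, ⟨huU, hu1⟩, rfl⟩
        exact hg ▸ Set.mem_image_of_mem (fun a => g * a) this
      -- g * (k * u) = u₀ * u
      have hgku : g * (k * u) = u₀ * u := by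
        rw [← hgu₀]
        calc (k * u₀) * (k * u) = k * (k * (u₀ * u)) := by
              simp [comm, lcomm, mul_assoc]
          _ = u₀ * u := sq' _ _
      rcases hguA with h1 | ⟨v, ⟨hvU, hv1⟩, hve⟩
      · -- u₀ * u = 1 so u = u₀
        have h1 : g * (k * u) = 1 := h1
        rw [hgku] at h1
        apply hune
        rw [← sq' u₀ u, h1, mul_one]
      · -- k * v = u₀ * u, so k ∈ U
        simp only at hve
        rw [hgku] at hve
        have hkeq : k = u₀ * (u * v) := by
          rw [← sq' v k, comm v k, hve]
          simp [comm, lcomm, sq', hG]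
        exact hUWfalse k (hkeq ▸ mul_mem hu₀U (mul_mem huU hvU)) hk hk1
end
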